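/- arXiv:1809.03814 — 2 statements merged into one kernel-verified Lean document; each statement's English description precedes it below -/
import Mathlib

section
/- The substituted monomorphism is a monomorphism: given extended graphs G, D with x ∈ V_G, and injective extended graph homomorphisms m₁:G→G' and m₂:D→D' (with m₁(x) a vertex of G'), the map m₃ defined by m₃(v)=m₁(v) for v∈V_G∖{x} and m₃(v)=m₂(v) for v∈V_D is an injective extended graph homomorphism G[x/D] → G'[m₁(x)/D'], provided the images of m₁ and m₂ are suitably disjoint and m₁, m₂ reflect the neighbourhood structure of x and m₁(x). -/
/-- Vertex labels: node-vertex labels, wire-vertex labels, and nonterminal labels. -/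
inductive VLab : Type
  | node : ℕ → VLab
  | wire : ℕ → VLab
  | nt : ℕ → VLab
  deriving DecidableEq

/-- Edge labels: plain (terminal) labels and encoding labels. -/
inductive ELab : Type
  | plain : ℕ → ELab
  | enc : ℕ → ELab
  deriving DecidableEq

def VLab.isNode : VLab → Bool | .node _ => true | _ => false
def VLab.isWire : VLab → Bool | .wire _ => true | _ => false
def VLab.isNT : VLab → Bool | .nt _ => true | _ => false
def ELab.isEnc : ELab → Bool | .enc _ => true | _ => false

/-- A finite labelled directed graph with vertices drawn from ℕ. -/
structure LGraph : Type where
  V : Finset ℕ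
  E : Finset (ℕ × ELab × ℕ)
  lab : ℕ → VLab

def inDeg (H : LGraph) (v : ℕ) : ℕ := (H.E.filter (fun e => e.2.2 = v)).card
def outDeg (H : LGraph) (v : ℕ) : ℕ := (H.E.filter (fun e => e.1 = v)).card

/-- Edges connect distinct vertices of the graph (no self-loops). -/
def WellFormed (H : LGraph) : Prop := ∀ e ∈ H.E, e.1 ∈ H.V ∧ e.2.2 ∈ H.V ∧ e.1 ≠ e.2.2

/-- A string graph: wire-vertices have in/out-degree at most one, no encoding
edges, and node-vertices are adjacent only to wire-vertices. -/
def StringGraph (H : LGraph) : Prop :=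
  WellFormed H ∧
  (∀ v ∈ H.V, (H.lab v).isNode = true ∨ (H.lab v).isWire = true) ∧
  (∀ v ∈ H.V, (H.lab v).isWire = true → inDeg H v ≤ 1 ∧ outDeg H v ≤ 1) ∧
  (∀ e ∈ H.E, e.2.1.isEnc = false) ∧
  (∀ e ∈ H.E, ¬((H.lab e.1).isNode = true ∧ (H.lab e.2.2).isNode = true))

/-- An encoded string graph: like a string graph but encoding-labelled edges
between node-vertices are allowed. -/
def EncodedSG (H : LGraph) : Prop :=
  WellFormed H ∧
  (∀ v ∈ H.V, (H.lab v).isNode = true ∨ (H.lab v).isWire = true) ∧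
  (∀ v ∈ H.V, (H.lab v).isWire = true → inDeg H v ≤ 1 ∧ outDeg H v ≤ 1) ∧
  (∀ e ∈ H.E, if e.2.1.isEnc = true
    then (H.lab e.1).isNode = true ∧ (H.lab e.2.2).isNode = true
    else ¬((H.lab e.1).isNode = true ∧ (H.lab e.2.2).isNode = true))

/-- Number of encoding edges. -/
def encCount (H : LGraph) : ℕ := (H.E.filter (fun e => e.2.1.isEnc = true)).card

def isInput (H : LGraph) (v : ℕ) : Prop := (H.lab v).isWire = true ∧ inDeg H v = 0
def isOutput (H : LGraph) (v : ℕ) : Prop := (H.lab v).isWire = true ∧ outDeg H v = 0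

/-- A decoding rule: a replacement fragment with two distinguished node-vertices. -/
structure DecRule : Type where
  F : LGraph
  src : ℕ
  tgt : ℕ

/-- A decoding system: one rule for every triple (encoding label, node label, node label). -/
structure DecSystem : Type where
  rule : ℕ → ℕ → ℕ → DecRule

/-- The rule for (α,σ₁,σ₂) has as RHS a string graph on the two node-vertices with at
least one additional vertex and no inputs, outputs or encoding edges. -/
def ValidDecRule (R : DecRule) (s1 s2 : ℕ) : Prop :=
  R.src ∈ R.F.V ∧ R.tgt ∈ R.F.V ∧ R.src ≠ R.tgt ∧
  R.F.lab R.src = VLab.node s1 ∧ R.F.lab R.tgt = VLab.node s2 ∧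
  StringGraph R.F ∧ 3 ≤ R.F.V.card ∧
  (∀ v ∈ R.F.V, (R.F.lab v).isNode = true → v = R.src ∨ v = R.tgt) ∧
  (∀ v ∈ R.F.V, (R.F.lab v).isWire = true → inDeg R.F v = 1 ∧ outDeg R.F v = 1)

def ValidDecSystem (T : DecSystem) : Prop := ∀ a s1 s2, ValidDecRule (T.rule a s1 s2) s1 s2

/-- One DPO decoding step: remove one encoding edge and glue in a fresh copy of the
corresponding rule's right-hand side on its two endpoints. -/
def DecStep (T : DecSystem) (H H' : LGraph) : Prop :=
  ∃ u a w s1 s2, (u, ELab.enc a, w) ∈ H.E ∧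
    H.lab u = VLab.node s1 ∧ H.lab w = VLab.node s2 ∧
    ∃ ρ : ℕ → ℕ,
      Set.InjOn ρ ↑(T.rule a s1 s2).F.V ∧
      ρ (T.rule a s1 s2).src = u ∧ ρ (T.rule a s1 s2).tgt = w ∧
      (∀ x ∈ (T.rule a s1 s2).F.V, x ≠ (T.rule a s1 s2).src → x ≠ (T.rule a s1 s2).tgt →
        ρ x ∉ H.V) ∧
      H'.V = H.V ∪ (T.rule a s1 s2).F.V.image ρ ∧
      H'.E = (H.E.erase (u, ELab.enc a, w)) ∪
        (T.rule a s1 s2).F.E.image (fun e => (ρ e.1, e.2.1, ρ e.2.2)) ∧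
      (∀ v ∈ H.V, H'.lab v = H.lab v) ∧
      (∀ x ∈ (T.rule a s1 s2).F.V, H'.lab (ρ x) = (T.rule a s1 s2).F.lab x)

/-- Full decoding: exhaustive application of the decoding system. -/
def FullDecode (T : DecSystem) (H H' : LGraph) : Prop :=
  Relation.ReflTransGen (DecStep T) H H' ∧ encCount H' = 0

/-- LGraph isomorphism. -/
def GIso (H K : LGraph) : Prop :=
  ∃ f : ℕ → ℕ, Set.BijOn f ↑H.V ↑K.V ∧
    (∀ v ∈ H.V, K.lab (f v) = H.lab v) ∧
    (∀ u l w, u ∈ H.V → w ∈ H.V → ((u, l, w) ∈ H.E ↔ (f u, l, f w) ∈ K.E))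

/-- An extended graph: a graph together with a connection relation
C ⊆ Σ × Γ × Γ × V × {in,out} (here Bool, `true` = in). -/
structure ExtGraph extends LGraph where
  C : Finset (VLab × ELab × ELab × ℕ × Bool)

/-- Well-formedness of an extended graph. -/
def WFE (H : ExtGraph) : Prop :=
  (∀ e ∈ H.E, e.1 ∈ H.V ∧ e.2.2 ∈ H.V ∧ e.1 ≠ e.2.2) ∧ (∀ c ∈ H.C, c.2.2.2.1 ∈ H.V)

/-- Extended graph homomorphism: preserves vertices, labels, edges and
connection instructions. -/
def ExtHom (f : ℕ → ℕ) (H K : ExtGraph) : Prop :=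
  (∀ v ∈ H.V, f v ∈ K.V) ∧
  (∀ v ∈ H.V, K.lab (f v) = H.lab v) ∧
  (∀ e ∈ H.E, (f e.1, e.2.1, f e.2.2) ∈ K.E) ∧
  (∀ c ∈ H.C, (c.1, c.2.1, c.2.2.1, f c.2.2.2.1, c.2.2.2.2) ∈ K.C)

/-- Extended graph isomorphism. -/
def ExtIso (H K : ExtGraph) : Prop :=
  ∃ f : ℕ → ℕ, Set.BijOn f ↑H.V ↑K.V ∧
    (∀ v ∈ H.V, K.lab (f v) = H.lab v) ∧
    (∀ u l w, u ∈ H.V → w ∈ H.V → ((u, l, w) ∈ H.E ↔ (f u, l, f w) ∈ K.E)) ∧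
    (∀ σ β γ x d, x ∈ H.V → ((σ, β, γ, x, d) ∈ H.C ↔ (σ, β, γ, f x, d) ∈ K.C))

/-- Bridge edges established by "in" connection instructions of `D` when
substituting `D` for vertex `v` of `H`: for (σ,β,γ,x,in) ∈ C_D and a σ-labelled
vertex w of H with a β-labelled edge into v, add a γ-labelled edge from w to x. -/
def bridgeIn (H : ExtGraph) (v : ℕ) (D : ExtGraph) : Finset (ℕ × ELab × ℕ) :=
  ((D.C ×ˢ H.E).filter (fun q =>
      q.1.2.2.2.2 = true ∧ q.2.2.2 = v ∧ q.2.2.1 = q.1.2.1 ∧ H.lab q.2.1 = q.1.1)).image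
    (fun q => (q.2.1, q.1.2.2.1, q.1.2.2.2.1))

/-- Bridge edges established by "out" connection instructions of `D`. -/
def bridgeOut (H : ExtGraph) (v : ℕ) (D : ExtGraph) : Finset (ℕ × ELab × ℕ) :=
  ((D.C ×ˢ H.E).filter (fun q =>
      q.1.2.2.2.2 = false ∧ q.2.1 = v ∧ q.2.2.1 = q.1.2.1 ∧ H.lab q.2.2.2 = q.1.1)).image
    (fun q => (q.1.2.2.2.1, q.1.2.2.1, q.2.2.2))

/-- Connection relation of the substitution: instructions of H not pointing at v,
together with compositions of instructions of H pointing at v with instructions of D. -/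
def substC (H : ExtGraph) (v : ℕ) (D : ExtGraph) : Finset (VLab × ELab × ELab × ℕ × Bool) :=
  H.C.filter (fun c => c.2.2.2.1 ≠ v) ∪
  ((H.C ×ˢ D.C).filter (fun q =>
      q.1.2.2.2.1 = v ∧ q.2.1 = q.1.1 ∧ q.2.2.1 = q.1.2.2.1 ∧ q.2.2.2.2.2 = q.1.2.2.2.2)).image
    (fun q => (q.1.1, q.1.2.1, q.2.2.2.1, q.2.2.2.2.1, q.1.2.2.2.2))

/-- Substitution of the extended graph `D` for vertex `v` in `H`. -/
def subst (H : ExtGraph) (v : ℕ) (D : ExtGraph) : ExtGraph where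
  V := H.V.erase v ∪ D.V
  E := H.E.filter (fun e => e.1 ≠ v ∧ e.2.2 ≠ v) ∪ D.E ∪ bridgeIn H v D ∪ bridgeOut H v D
  lab := fun x => if x ∈ D.V then D.lab x else H.lab x
  C := substC H v D

/-- An edNCE grammar: an (index set of) productions X → (D,C) and an initial
nonterminal label. -/
structure Grammar where
  ι : Type
  lhs : ι → ℕ
  rhs : ι → ExtGraph
  S : ℕ

/-- The initial extended graph: a single vertex `z` labelled by the nonterminal `s`. -/
def sn (s z : ℕ) : ExtGraph := ⟨⟨{z}, ∅, fun _ => VLab.nt s⟩, ∅⟩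

/-- A derivation step replacing the nonterminal vertex `v` using production `p`
(applied via a fresh isomorphic copy `D` of its right-hand side). -/
def DerStepAt (G : Grammar) (v : ℕ) (p : G.ι) (H H' : ExtGraph) : Prop :=
  v ∈ H.V ∧ H.lab v = VLab.nt (G.lhs p) ∧
  ∃ D : ExtGraph, WFE D ∧ ExtIso D (G.rhs p) ∧ (∀ x ∈ D.V, x ∉ H.V) ∧ H' = subst H v D

def DerStep (G : Grammar) (H H' : ExtGraph) : Prop := ∃ v p, DerStepAt G v p H H'

/-- A terminal (extended) graph: no nonterminal vertices. -/
def Terminal (H : ExtGraph) : Prop := ∀ v ∈ H.V, (H.lab v).isNT = false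

/-- The substituted map: use m₂ on the daughter graph and m₁ elsewhere. -/
def SM (m₁ m₂ : ℕ → ℕ) (D : ExtGraph) : ℕ → ℕ :=
  fun y => if y ∈ D.V then m₂ y else m₁ y

/-! `SM m₁ m₂ D` agrees with `m₁` on the surviving vertices of `G` and with `m₂` on those of `D`.
Every edge and connection instruction of `G[x/D]` is a surviving one of `G`, one of `D`, or is
assembled from an instruction of `D` and an edge or instruction of `G` at `x` whose labels match;
homomorphisms preserve all of these labels, so the assembled data is mapped to data assembled in
the same way in `G'[m₁ x/D']`. Injectivity of `m₁` keeps the surviving vertices away from `m₁ x`,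
and disjointness of the images of `G.V \ {x}` and `D.V` makes `SM` injective. -/

open Finset

lemma WFE.mem_V_of_mem_E {H : ExtGraph} (hH : WFE H) {a b : ℕ} {l : ELab} (he : (a, l, b) ∈ H.E) :
    a ∈ H.V ∧ b ∈ H.V :=
  ⟨(hH.1 _ he).1, (hH.1 _ he).2.1⟩

lemma WFE.mem_V_of_mem_C {H : ExtGraph} (hH : WFE H) {σ : VLab} {β γ : ELab} {y : ℕ} {d : Bool}
    (hc : (σ, β, γ, y, d) ∈ H.C) : y ∈ H.V :=
  hH.2 _ hc

namespace ExtHom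

variable {f : ℕ → ℕ} {H K : ExtGraph}

lemma map_mem_V (h : ExtHom f H K) {v : ℕ} (hv : v ∈ H.V) : f v ∈ K.V := h.1 v hv

lemma lab_map (h : ExtHom f H K) {v : ℕ} (hv : v ∈ H.V) : K.lab (f v) = H.lab v := h.2.1 v hv

lemma map_mem_E (h : ExtHom f H K) {a b : ℕ} {l : ELab} (he : (a, l, b) ∈ H.E) :
    (f a, l, f b) ∈ K.E :=
  h.2.2.1 _ he

lemma map_mem_C (h : ExtHom f H K) {σ : VLab} {β γ : ELab} {y : ℕ} {d : Bool}
    (hc : (σ, β, γ, y, d) ∈ H.C) : (σ, β, γ, f y, d) ∈ K.C :=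
  h.2.2.2 _ hc

end ExtHom

section Substitution

variable {H D : ExtGraph} {v : ℕ}

lemma mem_subst_V {y : ℕ} : y ∈ (subst H v D).V ↔ (y ≠ v ∧ y ∈ H.V) ∨ y ∈ D.V := by
  simp [subst]

lemma subst_lab_of_mem {y : ℕ} (hy : y ∈ D.V) : (subst H v D).lab y = D.lab y := if_pos hy

lemma subst_lab_of_not_mem {y : ℕ} (hy : y ∉ D.V) : (subst H v D).lab y = H.lab y := if_neg hy

lemma mem_subst_E {a b : ℕ} {l : ELab} :
    (a, l, b) ∈ (subst H v D).E ↔ ((a, l, b) ∈ H.E ∧ a ≠ v ∧ b ≠ v) ∨ (a, l, b) ∈ D.E ∨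
      (a, l, b) ∈ bridgeIn H v D ∨ (a, l, b) ∈ bridgeOut H v D := by
  simp only [subst, mem_union, mem_filter, or_assoc]

lemma mem_bridgeIn {w y : ℕ} {γ : ELab} :
    (w, γ, y) ∈ bridgeIn H v D ↔ ∃ β, (H.lab w, β, γ, y, true) ∈ D.C ∧ (w, β, v) ∈ H.E := by
  simp only [bridgeIn, mem_image, mem_filter, mem_product, Prod.exists, Prod.mk.injEq]
  constructor
  · rintro ⟨σ, β, γ', y', d, w', β', v', ⟨⟨hc, he⟩, rfl, rfl, rfl, rfl⟩, rfl, rfl, rfl⟩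
    exact ⟨_, hc, he⟩
  · rintro ⟨β, hc, he⟩
    exact ⟨_, _, _, _, _, _, _, _, ⟨⟨hc, he⟩, rfl, rfl, rfl, rfl⟩, rfl, rfl, rfl⟩

lemma mem_bridgeOut {w y : ℕ} {γ : ELab} :
    (y, γ, w) ∈ bridgeOut H v D ↔ ∃ β, (H.lab w, β, γ, y, false) ∈ D.C ∧ (v, β, w) ∈ H.E := by
  simp only [bridgeOut, mem_image, mem_filter, mem_product, Prod.exists, Prod.mk.injEq]
  constructor
  · rintro ⟨σ, β, γ', y', d, v', β', w', ⟨⟨hc, he⟩, rfl, rfl, rfl, rfl⟩, rfl, rfl, rfl⟩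
    exact ⟨_, hc, he⟩
  · rintro ⟨β, hc, he⟩
    exact ⟨_, _, _, _, _, _, _, _, ⟨⟨hc, he⟩, rfl, rfl, rfl, rfl⟩, rfl, rfl, rfl⟩

lemma mem_substC {σ : VLab} {β γ : ELab} {y : ℕ} {d : Bool} :
    (σ, β, γ, y, d) ∈ substC H v D ↔ ((σ, β, γ, y, d) ∈ H.C ∧ y ≠ v) ∨
      ∃ δ, (σ, β, δ, v, d) ∈ H.C ∧ (σ, δ, γ, y, d) ∈ D.C := by
  simp only [substC, mem_union, mem_filter, mem_image, mem_product, Prod.exists, Prod.mk.injEq]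
  refine or_congr Iff.rfl ⟨?_, ?_⟩
  · rintro ⟨σ, β, δ, v', d, σ', δ', γ', y', d', ⟨⟨hc, hc'⟩, rfl, rfl, rfl, rfl⟩,
      rfl, rfl, rfl, rfl, rfl⟩
    exact ⟨_, hc, hc'⟩
  · rintro ⟨δ, hc, hc'⟩
    exact ⟨_, _, _, _, _, _, _, _, _, _, ⟨⟨hc, hc'⟩, rfl, rfl, rfl, rfl⟩, rfl, rfl, rfl, rfl, rfl⟩

end Substitution

section SubstitutedMap

variable {G G' D D' : ExtGraph} {x : ℕ} {m₁ m₂ : ℕ → ℕ}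

lemma SM_of_mem {y : ℕ} (hy : y ∈ D.V) : SM m₁ m₂ D y = m₂ y := if_pos hy

lemma SM_of_not_mem {y : ℕ} (hy : y ∉ D.V) : SM m₁ m₂ D y = m₁ y := if_neg hy

lemma ExtHom.map_mem_bridgeIn (hwfG : WFE G) (h₁ : ExtHom m₁ G G') (h₂ : ExtHom m₂ D D')
    {w y : ℕ} {γ : ELab} (h : (w, γ, y) ∈ bridgeIn G x D) :
    (m₁ w, γ, m₂ y) ∈ bridgeIn G' (m₁ x) D' := by
  obtain ⟨β, hc, he⟩ := mem_bridgeIn.1 h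
  rw [mem_bridgeIn, h₁.lab_map (hwfG.mem_V_of_mem_E he).1]
  exact ⟨β, h₂.map_mem_C hc, h₁.map_mem_E he⟩

lemma ExtHom.map_mem_bridgeOut (hwfG : WFE G) (h₁ : ExtHom m₁ G G') (h₂ : ExtHom m₂ D D')
    {w y : ℕ} {γ : ELab} (h : (y, γ, w) ∈ bridgeOut G x D) :
    (m₂ y, γ, m₁ w) ∈ bridgeOut G' (m₁ x) D' := by
  obtain ⟨β, hc, he⟩ := mem_bridgeOut.1 h
  rw [mem_bridgeOut, h₁.lab_map (hwfG.mem_V_of_mem_E he).2]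
  exact ⟨β, h₂.map_mem_C hc, h₁.map_mem_E he⟩

variable (hwfG : WFE G) (hwfD : WFE D) (hx : x ∈ G.V) (hGD : ∀ a ∈ G.V, a ∉ D.V)
  (h₁ : ExtHom m₁ G G') (h₁i : Set.InjOn m₁ ↑G.V) (h₂ : ExtHom m₂ D D')
include hwfG hwfD hx hGD h₁ h₁i h₂

lemma SM_mem_subst_E {a b : ℕ} {l : ELab} (he : (a, l, b) ∈ (subst G x D).E) :
    (SM m₁ m₂ D a, l, SM m₁ m₂ D b) ∈ (subst G' (m₁ x) D').E := by
  rw [mem_subst_E] at he ⊢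
  rcases he with ⟨heG, hax, hbx⟩ | heD | heIn | heOut
  · obtain ⟨ha, hb⟩ := hwfG.mem_V_of_mem_E heG
    rw [SM_of_not_mem (hGD a ha), SM_of_not_mem (hGD b hb)]
    exact Or.inl ⟨h₁.map_mem_E heG, h₁i.ne ha hx hax, h₁i.ne hb hx hbx⟩
  · obtain ⟨ha, hb⟩ := hwfD.mem_V_of_mem_E heD
    rw [SM_of_mem ha, SM_of_mem hb]
    exact Or.inr (Or.inl (h₂.map_mem_E heD))
  · obtain ⟨β, hc, heG⟩ := mem_bridgeIn.1 heIn
    rw [SM_of_not_mem (hGD a (hwfG.mem_V_of_mem_E heG).1), SM_of_mem (hwfD.mem_V_of_mem_C hc)]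
    exact Or.inr (Or.inr (Or.inl (h₁.map_mem_bridgeIn hwfG h₂ heIn)))
  · obtain ⟨β, hc, heG⟩ := mem_bridgeOut.1 heOut
    rw [SM_of_mem (hwfD.mem_V_of_mem_C hc), SM_of_not_mem (hGD b (hwfG.mem_V_of_mem_E heG).2)]
    exact Or.inr (Or.inr (Or.inr (h₁.map_mem_bridgeOut hwfG h₂ heOut)))

lemma SM_mem_substC {σ : VLab} {β γ : ELab} {y : ℕ} {d : Bool}
    (hc : (σ, β, γ, y, d) ∈ substC G x D) :
    (σ, β, γ, SM m₁ m₂ D y, d) ∈ substC G' (m₁ x) D' := by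
  rw [mem_substC] at hc ⊢
  rcases hc with ⟨hcG, hyx⟩ | ⟨δ, hcG, hcD⟩
  · have hy := hwfG.mem_V_of_mem_C hcG
    rw [SM_of_not_mem (hGD y hy)]
    exact Or.inl ⟨h₁.map_mem_C hcG, h₁i.ne hy hx hyx⟩
  · rw [SM_of_mem (hwfD.mem_V_of_mem_C hcD)]
    exact Or.inr ⟨δ, h₁.map_mem_C hcG, h₂.map_mem_C hcD⟩

theorem ExtHom.SM_subst (hGD' : ∀ a ∈ G'.V, a ∉ D'.V) :
    ExtHom (SM m₁ m₂ D) (subst G x D) (subst G' (m₁ x) D') := by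
  refine ⟨fun v hv => ?_, fun v hv => ?_, fun ⟨a, l, b⟩ he => ?_, fun ⟨σ, β, γ, y, d⟩ hc => ?_⟩
  · rw [mem_subst_V] at hv ⊢
    rcases hv with ⟨hvx, hv⟩ | hv
    · rw [SM_of_not_mem (hGD v hv)]
      exact Or.inl ⟨h₁i.ne hv hx hvx, h₁.map_mem_V hv⟩
    · rw [SM_of_mem hv]
      exact Or.inr (h₂.map_mem_V hv)
  · rcases mem_subst_V.1 hv with ⟨-, hv⟩ | hv
    · rw [SM_of_not_mem (hGD v hv), subst_lab_of_not_mem (hGD' _ (h₁.map_mem_V hv)),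
        subst_lab_of_not_mem (hGD v hv), h₁.lab_map hv]
    · rw [SM_of_mem hv, subst_lab_of_mem (h₂.map_mem_V hv), subst_lab_of_mem hv, h₂.lab_map hv]
  · exact SM_mem_subst_E hwfG hwfD hx hGD h₁ h₁i h₂ he
  · exact SM_mem_substC hwfG hwfD hx hGD h₁ h₁i h₂ hc

end SubstitutedMap

lemma injOn_SM_subst {G D : ExtGraph} {x : ℕ} {m₁ m₂ : ℕ → ℕ} (hGD : ∀ a ∈ G.V, a ∉ D.V)
    (h₁i : Set.InjOn m₁ ↑G.V) (h₂i : Set.InjOn m₂ ↑D.V)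
    (hdisj : ∀ a ∈ G.V, a ≠ x → ∀ b ∈ D.V, m₁ a ≠ m₂ b) :
    Set.InjOn (SM m₁ m₂ D) ↑(subst G x D).V := by
  intro a ha b hb hab
  rw [mem_coe, mem_subst_V] at ha hb
  rcases ha with ⟨hax, ha⟩ | ha <;> rcases hb with ⟨hbx, hb⟩ | hb
  · rw [SM_of_not_mem (hGD a ha), SM_of_not_mem (hGD b hb)] at hab
    exact h₁i ha hb hab
  · rw [SM_of_not_mem (hGD a ha), SM_of_mem hb] at hab
    exact absurd hab (hdisj a ha hax b hb)
  · rw [SM_of_mem ha, SM_of_not_mem (hGD b hb)] at hab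
    exact absurd hab.symm (hdisj b hb hbx a ha)
  · rw [SM_of_mem ha, SM_of_mem hb] at hab
    exact h₂i ha hb hab

theorem substituted_monomorphism_general (G G' D D' : ExtGraph) (x : ℕ) (m₁ m₂ : ℕ → ℕ)
    (hwfG : WFE G) (hwfD : WFE D)
    (hx : x ∈ G.V)
    (h₁ : ExtHom m₁ G G') (h₁i : Set.InjOn m₁ ↑G.V)
    (h₂ : ExtHom m₂ D D') (h₂i : Set.InjOn m₂ ↑D.V)
    (hGD : ∀ a ∈ G.V, a ∉ D.V) (hGD' : ∀ a ∈ G'.V, a ∉ D'.V)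
    (hdisj : ∀ a ∈ G.V, a ≠ x → ∀ b ∈ D.V, m₁ a ≠ m₂ b) :
    ExtHom (SM m₁ m₂ D) (subst G x D) (subst G' (m₁ x) D') ∧
    Set.InjOn (SM m₁ m₂ D) ↑(subst G x D).V :=
  ⟨ExtHom.SM_subst hwfG hwfD hx hGD h₁ h₁i h₂ hGD', injOn_SM_subst hGD h₁i h₂i hdisj⟩

/-- The substituted monomorphism is a monomorphism: given injective
extended graph homomorphisms m₁ : G → G' and m₂ : D → D' with suitably disjoint
images which reflect the neighbourhood structure of x and m₁(x), the substituted
map SM(m₁,m₂,x) : G[x/D] → G'[m₁(x)/D'] is an injective extended graph homomorphism. -/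
theorem substituted_monomorphism (G G' D D' : ExtGraph) (x : ℕ) (m₁ m₂ : ℕ → ℕ)
    (hwfG : WFE G) (hwfG' : WFE G') (hwfD : WFE D) (hwfD' : WFE D')
    (hx : x ∈ G.V) (hxnt : (G.lab x).isNT = true)
    (h₁ : ExtHom m₁ G G') (h₁i : Set.InjOn m₁ ↑G.V)
    (h₂ : ExtHom m₂ D D') (h₂i : Set.InjOn m₂ ↑D.V)
    (hGD : ∀ a ∈ G.V, a ∉ D.V) (hGD' : ∀ a ∈ G'.V, a ∉ D'.V)
    (hdisj : ∀ a ∈ G.V, a ≠ x → ∀ b ∈ D.V, m₁ a ≠ m₂ b)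
    (hrefl : ∀ w ∈ G.V, ∀ β : ELab,
      ((m₁ w, β, m₁ x) ∈ G'.E ↔ (w, β, x) ∈ G.E) ∧
      ((m₁ x, β, m₁ w) ∈ G'.E ↔ (x, β, w) ∈ G.E)) :
    ExtHom (SM m₁ m₂ D) (subst G x D) (subst G' (m₁ x) D') ∧
    Set.InjOn (SM m₁ m₂ D) ↑(subst G x D).V :=
  substituted_monomorphism_general G G' D D' x m₁ m₂ hwfG hwfD hx h₁ h₁i h₂ h₂i hGD hGD' hdisj
end

section
/- Extended graph substitution is associative in the following sense: if H contains distinct nonterminal vertices u and v, and D, E are extended graphs disjoint from H and from each other, then (H[u/D])[v/E] ≅ (H[v/E])[u/D]; substituting at distinct nonterminal vertices commutes. -/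
/-! Both sides are equal as extended graphs, so the identity is the isomorphism. Each component
of `(H[u/D])[v/E]` is written in a form symmetric in `(u, D)` and `(v, E)`. The point is that,
because `u` and `v` are not adjacent and `v ∉ D`, the edges and instructions of `H[u/D]` at `v`
are exactly those of `H`, so the bridges and composed instructions created when substituting at
`v` can be computed in `H` itself. -/

def compC (H : ExtGraph) (v : ℕ) (D : ExtGraph) : Finset (VLab × ELab × ELab × ℕ × Bool) :=
  ((H.C ×ˢ D.C).filter (fun q =>
      q.1.2.2.2.1 = v ∧ q.2.1 = q.1.1 ∧ q.2.2.1 = q.1.2.2.1 ∧ q.2.2.2.2.2 = q.1.2.2.2.2)).image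
    (fun q => (q.1.1, q.1.2.1, q.2.2.2.1, q.2.2.2.2.1, q.1.2.2.2.2))

theorem ExtGraph.ext {H K : ExtGraph} (hV : H.V = K.V) (hE : H.E = K.E) (hlab : H.lab = K.lab)
    (hC : H.C = K.C) : H = K := by
  obtain ⟨⟨⟩, _⟩ := H
  obtain ⟨⟨⟩, _⟩ := K
  simp_all

theorem ExtIso.refl (H : ExtGraph) : ExtIso H H :=
  ⟨id, Set.bijOn_id _, fun _ _ => rfl, fun _ _ _ _ _ => Iff.rfl, fun _ _ _ _ _ _ => Iff.rfl⟩

section Subst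

variable {H D E : ExtGraph} {u v : ℕ}

theorem subst_E (H D : ExtGraph) (v : ℕ) :
    (subst H v D).E = H.E.filter (fun e => e.1 ≠ v ∧ e.2.2 ≠ v) ∪ D.E ∪
      bridgeIn H v D ∪ bridgeOut H v D := rfl

theorem subst_C (H D : ExtGraph) (v : ℕ) :
    (subst H v D).C = H.C.filter (fun c => c.2.2.2.1 ≠ v) ∪ compC H v D := rfl

theorem subst_lab_of_mem_s19 (hD : ∀ x ∈ D.V, x ∉ H.V) {x : ℕ} (hx : x ∈ H.V) :
    (subst H u D).lab x = H.lab x :=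
  if_neg fun h => hD x h hx

theorem exists_of_mem_bridgeIn (hwfD : WFE D) {e : ℕ × ELab × ℕ} (he : e ∈ bridgeIn H u D) :
    (∃ β, (e.1, β, u) ∈ H.E) ∧ e.2.2 ∈ D.V := by
  obtain ⟨q, hq, rfl⟩ := Finset.mem_image.1 he
  obtain ⟨hqDH, -, hqu, -⟩ := Finset.mem_filter.1 hq
  obtain ⟨hqD, hqH⟩ := Finset.mem_product.1 hqDH
  exact ⟨⟨q.2.2.1, hqu ▸ hqH⟩, hwfD.2 _ hqD⟩

theorem exists_of_mem_bridgeOut (hwfD : WFE D) {e : ℕ × ELab × ℕ} (he : e ∈ bridgeOut H u D) :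
    e.1 ∈ D.V ∧ ∃ β, (u, β, e.2.2) ∈ H.E := by
  obtain ⟨q, hq, rfl⟩ := Finset.mem_image.1 he
  obtain ⟨hqDH, -, hqu, -⟩ := Finset.mem_filter.1 hq
  obtain ⟨hqD, hqH⟩ := Finset.mem_product.1 hqDH
  exact ⟨hwfD.2 _ hqD, q.2.2.1, hqu ▸ hqH⟩

theorem mem_of_mem_compC (hwfD : WFE D) {c : VLab × ELab × ELab × ℕ × Bool}
    (hc : c ∈ compC H u D) : c.2.2.2.1 ∈ D.V := by
  obtain ⟨q, hq, rfl⟩ := Finset.mem_image.1 hc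
  exact hwfD.2 q.2 (Finset.mem_product.1 (Finset.mem_filter.1 hq).1).2

theorem mem_subst_E_iff_of_incident (hwfD : WFE D) (hvD : v ∉ D.V) (huv : u ≠ v)
    (hadj : ∀ β, (u, β, v) ∉ H.E ∧ (v, β, u) ∉ H.E) {a b : ℕ} {β : ELab} (hab : a = v ∨ b = v) :
    (a, β, b) ∈ (subst H u D).E ↔ (a, β, b) ∈ H.E := by
  rw [subst_E]
  simp only [Finset.mem_union, Finset.mem_filter]
  constructor
  · rintro (((⟨h, -⟩ | h) | h) | h)
    · exact h
    · obtain ⟨ha, hb, -⟩ := hwfD.1 _ h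
      exact absurd (hab.elim (· ▸ ha) (· ▸ hb)) hvD
    · obtain ⟨⟨γ, hγ⟩, hb⟩ := exists_of_mem_bridgeIn hwfD h
      obtain rfl : a = v := hab.resolve_right fun h => hvD (h ▸ hb)
      exact ((hadj γ).2 hγ).elim
    · obtain ⟨ha, γ, hγ⟩ := exists_of_mem_bridgeOut hwfD h
      obtain rfl : b = v := hab.resolve_left fun h => hvD (h ▸ ha)
      exact ((hadj γ).1 hγ).elim
  · intro h
    refine Or.inl (Or.inl (Or.inl ⟨h, ?_, ?_⟩))
    · rintro rfl
      obtain rfl : b = v := hab.resolve_left huv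
      exact (hadj β).1 h
    · rintro rfl
      obtain rfl : a = v := hab.resolve_right huv
      exact (hadj β).2 h

theorem bridgeIn_subst_of_not_adj (hwfH : WFE H) (hwfD : WFE D) (hD : ∀ x ∈ D.V, x ∉ H.V)
    (hvD : v ∉ D.V) (huv : u ≠ v) (hadj : ∀ β, (u, β, v) ∉ H.E ∧ (v, β, u) ∉ H.E) :
    bridgeIn (subst H u D) v E = bridgeIn H v E := by
  unfold bridgeIn
  congr 1
  ext ⟨c, a, β, b⟩
  simp only [Finset.mem_filter, Finset.mem_product]
  constructor <;> rintro ⟨⟨hc, he⟩, hd, rfl, hβ, hlab⟩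
  · have he' := (mem_subst_E_iff_of_incident hwfD hvD huv hadj (Or.inr rfl)).1 he
    exact ⟨⟨hc, he'⟩, hd, rfl, hβ, subst_lab_of_mem_s19 hD (hwfH.1 _ he').1 ▸ hlab⟩
  · exact ⟨⟨hc, (mem_subst_E_iff_of_incident hwfD hvD huv hadj (Or.inr rfl)).2 he⟩, hd, rfl, hβ,
      (subst_lab_of_mem_s19 hD (hwfH.1 _ he).1).trans hlab⟩

theorem bridgeOut_subst_of_not_adj (hwfH : WFE H) (hwfD : WFE D) (hD : ∀ x ∈ D.V, x ∉ H.V)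
    (hvD : v ∉ D.V) (huv : u ≠ v) (hadj : ∀ β, (u, β, v) ∉ H.E ∧ (v, β, u) ∉ H.E) :
    bridgeOut (subst H u D) v E = bridgeOut H v E := by
  unfold bridgeOut
  congr 1
  ext ⟨c, a, β, b⟩
  simp only [Finset.mem_filter, Finset.mem_product]
  constructor <;> rintro ⟨⟨hc, he⟩, hd, rfl, hβ, hlab⟩
  · have he' := (mem_subst_E_iff_of_incident hwfD hvD huv hadj (Or.inl rfl)).1 he
    exact ⟨⟨hc, he'⟩, hd, rfl, hβ, subst_lab_of_mem_s19 hD (hwfH.1 _ he').2.1 ▸ hlab⟩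
  · exact ⟨⟨hc, (mem_subst_E_iff_of_incident hwfD hvD huv hadj (Or.inl rfl)).2 he⟩, hd, rfl, hβ,
      (subst_lab_of_mem_s19 hD (hwfH.1 _ he).2.1).trans hlab⟩

theorem filter_subst_E (hwfD : WFE D) (hvD : v ∉ D.V)
    (hadj : ∀ β, (u, β, v) ∉ H.E ∧ (v, β, u) ∉ H.E) :
    (subst H u D).E.filter (fun e => e.1 ≠ v ∧ e.2.2 ≠ v) =
      H.E.filter (fun e => (e.1 ≠ u ∧ e.2.2 ≠ u) ∧ (e.1 ≠ v ∧ e.2.2 ≠ v)) ∪ D.E ∪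
        bridgeIn H u D ∪ bridgeOut H u D := by
  have hDv : ∀ e ∈ D.E, e.1 ≠ v ∧ e.2.2 ≠ v := fun e he => by
    obtain ⟨ha, hb, -⟩ := hwfD.1 e he
    exact ⟨fun h => hvD (h ▸ ha), fun h => hvD (h ▸ hb)⟩
  have hIn : ∀ e ∈ bridgeIn H u D, e.1 ≠ v ∧ e.2.2 ≠ v := fun e he => by
    obtain ⟨⟨γ, hγ⟩, hb⟩ := exists_of_mem_bridgeIn hwfD he
    exact ⟨fun h => (hadj γ).2 (h ▸ hγ), fun h => hvD (h ▸ hb)⟩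
  have hOut : ∀ e ∈ bridgeOut H u D, e.1 ≠ v ∧ e.2.2 ≠ v := fun e he => by
    obtain ⟨ha, γ, hγ⟩ := exists_of_mem_bridgeOut hwfD he
    exact ⟨fun h => hvD (h ▸ ha), fun h => (hadj γ).1 (h ▸ hγ)⟩
  rw [subst_E, Finset.filter_union, Finset.filter_union, Finset.filter_union,
    Finset.filter_filter, Finset.filter_true_of_mem hDv, Finset.filter_true_of_mem hIn,
    Finset.filter_true_of_mem hOut]

theorem subst_subst_E (hwfH : WFE H) (hwfD : WFE D) (hD : ∀ x ∈ D.V, x ∉ H.V)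
    (hvD : v ∉ D.V) (huv : u ≠ v) (hadj : ∀ β, (u, β, v) ∉ H.E ∧ (v, β, u) ∉ H.E) :
    (subst (subst H u D) v E).E =
      H.E.filter (fun e => (e.1 ≠ u ∧ e.2.2 ≠ u) ∧ (e.1 ≠ v ∧ e.2.2 ≠ v)) ∪
        (D.E ∪ bridgeIn H u D ∪ bridgeOut H u D) ∪ (E.E ∪ bridgeIn H v E ∪ bridgeOut H v E) := by
  rw [subst_E, filter_subst_E hwfD hvD hadj, bridgeIn_subst_of_not_adj hwfH hwfD hD hvD huv hadj,
    bridgeOut_subst_of_not_adj hwfH hwfD hD hvD huv hadj]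
  simp only [Finset.union_assoc]

theorem mem_subst_C_iff_of_ne (hwfD : WFE D) (hvD : v ∉ D.V) (huv : u ≠ v)
    {c : VLab × ELab × ELab × ℕ × Bool} (hc : c.2.2.2.1 = v) :
    c ∈ (subst H u D).C ↔ c ∈ H.C := by
  rw [subst_C, Finset.mem_union, Finset.mem_filter]
  refine ⟨?_, fun h => Or.inl ⟨h, hc ▸ huv.symm⟩⟩
  rintro (⟨h, -⟩ | h)
  · exact h
  · exact (hvD (hc ▸ mem_of_mem_compC hwfD h)).elim

theorem compC_subst_of_ne (hwfD : WFE D) (hvD : v ∉ D.V) (huv : u ≠ v) :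
    compC (subst H u D) v E = compC H v E := by
  unfold compC
  congr 1
  ext ⟨c, c'⟩
  simp only [Finset.mem_filter, Finset.mem_product]
  constructor <;> rintro ⟨⟨hc, hc'⟩, hv, rest⟩
  · exact ⟨⟨(mem_subst_C_iff_of_ne hwfD hvD huv hv).1 hc, hc'⟩, hv, rest⟩
  · exact ⟨⟨(mem_subst_C_iff_of_ne hwfD hvD huv hv).2 hc, hc'⟩, hv, rest⟩

theorem subst_subst_C (hwfD : WFE D) (hvD : v ∉ D.V) (huv : u ≠ v) :
    (subst (subst H u D) v E).C =
      H.C.filter (fun c => c.2.2.2.1 ≠ u ∧ c.2.2.2.1 ≠ v) ∪ (compC H u D ∪ compC H v E) := by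
  rw [subst_C, subst_C, compC_subst_of_ne hwfD hvD huv, Finset.filter_union, Finset.filter_filter,
    Finset.filter_true_of_mem fun c hc =>
      show c.2.2.2.1 ≠ v from fun h => hvD (h ▸ mem_of_mem_compC hwfD hc),
    Finset.union_assoc]

theorem subst_subst_V (hvD : v ∉ D.V) :
    (subst (subst H u D) v E).V = (H.V.erase u).erase v ∪ (D.V ∪ E.V) := by
  show (H.V.erase u ∪ D.V).erase v ∪ E.V = _
  rw [Finset.erase_union_distrib, Finset.erase_eq_of_notMem hvD, Finset.union_assoc]

theorem subst_subst_lab_comm (hDE : ∀ x ∈ D.V, x ∉ E.V) :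
    (subst (subst H u D) v E).lab = (subst (subst H v E) u D).lab := by
  funext x
  show (if x ∈ E.V then E.lab x else if x ∈ D.V then D.lab x else H.lab x) =
    (if x ∈ D.V then D.lab x else if x ∈ E.V then E.lab x else H.lab x)
  by_cases hxD : x ∈ D.V
  · simp [hxD, hDE x hxD]
  · simp [hxD]

theorem subst_subst_comm (hwfH : WFE H) (hwfD : WFE D) (hwfE : WFE E)
    (hu : u ∈ H.V) (hv : v ∈ H.V) (huv : u ≠ v)
    (hadj : ∀ β : ELab, (u, β, v) ∉ H.E ∧ (v, β, u) ∉ H.E)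
    (hD : ∀ x ∈ D.V, x ∉ H.V) (hE : ∀ x ∈ E.V, x ∉ H.V) (hDE : ∀ x ∈ D.V, x ∉ E.V) :
    subst (subst H u D) v E = subst (subst H v E) u D := by
  have hvD : v ∉ D.V := fun h => hD v h hv
  have huE : u ∉ E.V := fun h => hE u h hu
  have hadj' : ∀ β : ELab, (v, β, u) ∉ H.E ∧ (u, β, v) ∉ H.E := fun β => (hadj β).symm
  refine ExtGraph.ext ?_ ?_ (subst_subst_lab_comm hDE) ?_
  · rw [subst_subst_V hvD, subst_subst_V huE, Finset.erase_right_comm, Finset.union_comm D.V]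
  · rw [subst_subst_E hwfH hwfD hD hvD huv hadj, subst_subst_E hwfH hwfE hE huE huv.symm hadj',
      Finset.filter_congr fun _ _ => and_comm]
    ac_rfl
  · rw [subst_subst_C hwfD hvD huv, subst_subst_C hwfE huE huv.symm,
      Finset.filter_congr fun _ _ => and_comm, Finset.union_comm (compC H u D)]

end Subst

theorem subst_commutes_general (H D E : ExtGraph) (u v : ℕ)
    (hwfH : WFE H) (hwfD : WFE D) (hwfE : WFE E)
    (hu : u ∈ H.V) (hv : v ∈ H.V) (huv : u ≠ v)
    (hadj : ∀ β : ELab, (u, β, v) ∉ H.E ∧ (v, β, u) ∉ H.E)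
    (hD : ∀ x ∈ D.V, x ∉ H.V) (hE : ∀ x ∈ E.V, x ∉ H.V)
    (hDE : ∀ x ∈ D.V, x ∉ E.V) :
    ExtIso (subst (subst H u D) v E) (subst (subst H v E) u D) :=
  subst_subst_comm hwfH hwfD hwfE hu hv huv hadj hD hE hDE ▸ ExtIso.refl _

/-- Substituting at distinct (non-adjacent) nonterminal vertices
commutes: (H[u/D])[v/E] ≅ (H[v/E])[u/D]. -/
theorem subst_commutes (H D E : ExtGraph) (u v : ℕ)
    (hwfH : WFE H) (hwfD : WFE D) (hwfE : WFE E)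
    (hu : u ∈ H.V) (hv : v ∈ H.V) (huv : u ≠ v)
    (hntu : (H.lab u).isNT = true) (hntv : (H.lab v).isNT = true)
    (hadj : ∀ β : ELab, (u, β, v) ∉ H.E ∧ (v, β, u) ∉ H.E)
    (hD : ∀ x ∈ D.V, x ∉ H.V) (hE : ∀ x ∈ E.V, x ∉ H.V)
    (hDE : ∀ x ∈ D.V, x ∉ E.V)
    (hDC : ∀ c ∈ D.C, c.1.isNT = false) (hEC : ∀ c ∈ E.C, c.1.isNT = false)
    (hHC : ∀ c ∈ H.C, c.1.isNT = false) :
    ExtIso (subst (subst H u D) v E) (subst (subst H v E) u D) :=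
  subst_commutes_general H D E u v hwfH hwfD hwfE hu hv huv hadj hD hE hDE
end
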